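/- With the setup of Proposition 1 (L concentrated in bin H⋆, |A_n| = |A_k \ L| = Z, A_n and A_k disjoint, L ⊆ A_k), the condition int(c_{A_n}, c_L) ≥ int(c_{A_k\L}, c_L), where c_S is the normalized histogram of S and int is histogram intersection, is equivalent to h_{A_n}(H⋆) ≥ h_{A_k\L}(H⋆). -/

import Mathlib

/-- Unnormalized color histogram of a finite pixel set. -/
def hist {Pixel : Type*} [DecidableEq Pixel] {m : ℕ} (color : Pixel → Fin m)
    (S : Finset Pixel) (j : Fin m) : ℕ :=
  (S.filter (fun i => color i = j)).card

/-- Normalized color histogram of a finite pixel set. -/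
noncomputable def nhist {Pixel : Type*} [DecidableEq Pixel] {m : ℕ} (color : Pixel → Fin m)
    (S : Finset Pixel) (j : Fin m) : ℝ :=
  (hist color S j : ℝ) / (S.card : ℝ)

theorem sum_min_pi_single_one {ι R : Type*} [Fintype ι] [DecidableEq ι]
    [AddCommMonoidWithOne R] [LinearOrder R] (a : ι → R) (c : ι)
    (h0 : ∀ j, 0 ≤ a j) (h1 : a c ≤ 1) :
    ∑ j, min (a j) ((Pi.single c 1 : ι → R) j) = a c := by
  rw [Finset.sum_eq_single c (fun j _ hj => by simp [hj, h0 j]) (by simp)]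
  simp [h1]

section Histogram

variable {Pixel : Type*} [DecidableEq Pixel] {m : ℕ} (color : Pixel → Fin m)

theorem hist_le_card (S : Finset Pixel) (j : Fin m) : hist color S j ≤ S.card :=
  Finset.card_filter_le _ _

theorem nhist_nonneg (S : Finset Pixel) (j : Fin m) : 0 ≤ nhist color S j := by
  unfold nhist
  positivity

theorem nhist_le_one (S : Finset Pixel) (j : Fin m) : nhist color S j ≤ 1 := by
  unfold nhist
  exact div_le_one_of_le₀ (by exact_mod_cast hist_le_card color S j) (by positivity)

theorem nhist_eq_pi_single_of_forall_color_eq {L : Finset Pixel} {c : Fin m}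
    (hLne : L.Nonempty) (hcol : ∀ i ∈ L, color i = c) :
    nhist color L = Pi.single c 1 := by
  have hLcard : (L.card : ℝ) ≠ 0 := by exact_mod_cast hLne.card_pos.ne'
  ext j
  by_cases hj : j = c
  · subst hj
    simp [nhist, hist, Finset.filter_true_of_mem hcol, hLcard]
  · have hempty : L.filter (fun i => color i = j) = ∅ :=
      Finset.filter_eq_empty_iff.mpr fun i hi h => hj (h ▸ hcol i hi)
    simp [nhist, hist, hempty, hj]

theorem sum_min_nhist_of_forall_color_eq (S : Finset Pixel) {L : Finset Pixel} {c : Fin m}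
    (hLne : L.Nonempty) (hcol : ∀ i ∈ L, color i = c) :
    ∑ j, min (nhist color S j) (nhist color L j) = nhist color S c := by
  rw [nhist_eq_pi_single_of_forall_color_eq color hLne hcol]
  exact sum_min_pi_single_one _ c (nhist_nonneg color S) (nhist_le_one color S c)

theorem nhist_le_nhist_iff_of_card_eq {S T : Finset Pixel} (hST : S.card = T.card)
    (hT : 0 < T.card) (j : Fin m) :
    nhist color S j ≤ nhist color T j ↔ hist color S j ≤ hist color T j := by
  unfold nhist
  rw [hST, div_le_div_iff_of_pos_right (by exact_mod_cast hT)]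
  exact Nat.cast_le

end Histogram

theorem stmt7_general {Pixel : Type*} [DecidableEq Pixel] (m : ℕ) (color : Pixel → Fin m)
    (Ak An L : Finset Pixel) (Hstar : Fin m)
    (hLne : L.Nonempty)
    (hcol : ∀ i ∈ L, color i = Hstar)
    (hZ : An.card = (Ak \ L).card) (hZpos : 0 < An.card) :
    (∑ j, min (nhist color (Ak \ L) j) (nhist color L j)
       ≤ ∑ j, min (nhist color An j) (nhist color L j))
    ↔ hist color (Ak \ L) Hstar ≤ hist color An Hstar := by
  rw [sum_min_nhist_of_forall_color_eq color _ hLne hcol,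
    sum_min_nhist_of_forall_color_eq color _ hLne hcol]
  exact nhist_le_nhist_iff_of_card_eq color hZ.symm hZpos Hstar

theorem stmt7 {Pixel : Type*} [DecidableEq Pixel] (m : ℕ) (color : Pixel → Fin m)
    (Ak An L : Finset Pixel) (Hstar : Fin m)
    (hd : Disjoint An Ak) (hL : L ⊆ Ak) (hLne : L.Nonempty)
    (hcol : ∀ i ∈ L, color i = Hstar)
    (hZ : An.card = (Ak \ L).card) (hZpos : 0 < An.card) :
    (∑ j, min (nhist color (Ak \ L) j) (nhist color L j)
       ≤ ∑ j, min (nhist color An j) (nhist color L j))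
    ↔ hist color (Ak \ L) Hstar ≤ hist color An Hstar :=
  stmt7_general m color Ak An L Hstar hLne hcol hZ hZpos
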